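/- (Theorem 2, generalized exponential metric increasing property.) For any d × d real symmetric positive definite matrices A, B and G, the affine-invariant Riemannian distance dominates the G-parameterized LogEuclidean distance: δ_r(A,B) ≥ ‖log_G(A) − log_G(B)‖_G, where log_G(A) = G^{1/2} log(G^{-1/2} A G^{-1/2}) G^{1/2} and ‖S‖_G = √(tr(G^{-1} S G^{-1} S)) is the norm induced by the affine-invariant inner product on the tangent space at G. -/

import Mathlib

open Matrix
open scoped Classical

-- `mexp` is the matrix exponential of a real `d × d` matrix.
noncomputable def mexp {d : ℕ} (A : Matrix (Fin d) (Fin d) ℝ) : Matrix (Fin d) (Fin d) ℝ :=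
  NormedSpace.exp A

-- `mlog A` is the principal matrix logarithm: the unique symmetric matrix whose
-- matrix exponential is `A`, when `A` is symmetric positive definite.
noncomputable def mlog {d : ℕ} (A : Matrix (Fin d) (Fin d) ℝ) : Matrix (Fin d) (Fin d) ℝ :=
  if h : ∃ S : Matrix (Fin d) (Fin d) ℝ, S.IsSymm ∧ mexp S = A then h.choose else 0

-- `A^{1/2} = exp((1/2) log A)`.
noncomputable def msqrt {d : ℕ} (A : Matrix (Fin d) (Fin d) ℝ) : Matrix (Fin d) (Fin d) ℝ :=
  mexp ((1/2 : ℝ) • mlog A)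

-- `A^{-1/2} = exp(-(1/2) log A)`.
noncomputable def minvsqrt {d : ℕ} (A : Matrix (Fin d) (Fin d) ℝ) : Matrix (Fin d) (Fin d) ℝ :=
  mexp (-(1/2 : ℝ) • mlog A)

-- Frobenius norm.
noncomputable def frob {d : ℕ} (A : Matrix (Fin d) (Fin d) ℝ) : ℝ :=
  Real.sqrt ((Aᵀ * A).trace)

-- Affine-invariant Riemannian (AIRM) distance `δ_r(A,B) = ‖log(A^{-1/2} B A^{-1/2})‖_F`.
noncomputable def airm {d : ℕ} (A B : Matrix (Fin d) (Fin d) ℝ) : ℝ :=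
  frob (mlog (minvsqrt A * B * minvsqrt A))

-- Affine-invariant inner product at `G`: `⟨S,S'⟩_G = tr(G⁻¹ S G⁻¹ S')`.
noncomputable def innG {d : ℕ} (G S S' : Matrix (Fin d) (Fin d) ℝ) : ℝ :=
  (G⁻¹ * S * G⁻¹ * S').trace

-- Norm induced by the affine-invariant inner product at `G`.
noncomputable def normG {d : ℕ} (G S : Matrix (Fin d) (Fin d) ℝ) : ℝ :=
  Real.sqrt (innG G S S)

-- Logarithmic map at `G`: `log_G(A) = G^{1/2} log(G^{-1/2} A G^{-1/2}) G^{1/2}`.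
noncomputable def logMap {d : ℕ} (G A : Matrix (Fin d) (Fin d) ℝ) : Matrix (Fin d) (Fin d) ℝ :=
  msqrt G * mlog (minvsqrt G * A * minvsqrt G) * msqrt G

-- Exponential map at `G`: `exp_G(S) = G^{1/2} exp(G^{-1/2} S G^{-1/2}) G^{1/2}`.
noncomputable def expMap {d : ℕ} (G S : Matrix (Fin d) (Fin d) ℝ) : Matrix (Fin d) (Fin d) ℝ :=
  msqrt G * mexp (minvsqrt G * S * minvsqrt G) * msqrt G

-- Symmetric part `sym(M) = (M + Mᵀ)/2`.
noncomputable def symPart {d : ℕ} (M : Matrix (Fin d) (Fin d) ℝ) : Matrix (Fin d) (Fin d) ℝ :=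
  (1/2 : ℝ) • (M + Mᵀ)

/-!
Put `C = G^{-1/2} A^{1/2}` and `L = log (A^{-1/2} B A^{-1/2})`. Then `G^{-1/2} A G^{-1/2} = C Cᵀ`
and `G^{-1/2} B G^{-1/2} = C e^L Cᵀ`; the left-hand side is `‖log (C Cᵀ) - log (C e^L Cᵀ)‖_F`
and the right-hand side is `‖L‖_F`.

For positive definite `P`, `Q`, diagonalising `log P` and `log Q` and using
`x² ≤ eˣ + e⁻ˣ - 2` entrywise gives `‖log P - log Q‖_F² ≤ tr (Q P⁻¹ + P Q⁻¹ - 2)`. For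
`P = C Cᵀ`, `Q = C e^M Cᵀ` the right-hand side is `tr (e^M + e^{-M} - 2) ≤ ‖M‖_F² e^{‖M‖_F²/2}`,
which is `‖M‖_F²` up to a factor tending to `1` as `M → 0`. Cutting the geodesic
`t ↦ C e^{tL} Cᵀ` into `n` pieces and summing the bounds gives
`‖log (C Cᵀ) - log (C e^L Cᵀ)‖_F ≤ ‖L‖_F e^{‖L‖_F²/(4n²)}`; let `n → ∞`.
-/

lemma sq_le_exp_add_exp_neg_sub_two (x : ℝ) : x ^ 2 ≤ Real.exp x + Real.exp (-x) - 2 := by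
  obtain ⟨y, rfl⟩ : ∃ y, x = 2 * y := ⟨x / 2, by ring⟩
  have hsinh : |y| ≤ |Real.sinh y| := by
    rw [Real.abs_sinh]
    exact Real.self_le_sinh_iff.mpr (abs_nonneg _)
  have hcosh : Real.exp (2 * y) + Real.exp (-(2 * y)) - 2 = 4 * Real.sinh y ^ 2 := by
    rw [← Real.cosh_add_sinh, ← Real.cosh_sub_sinh, Real.cosh_two_mul, Real.cosh_sq]
    ring
  nlinarith [sq_le_sq.mpr hsinh]

lemma exp_add_exp_neg_sub_two_le (x : ℝ) :
    Real.exp x + Real.exp (-x) - 2 ≤ x ^ 2 * Real.exp (x ^ 2 / 2) := by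
  have hcosh : Real.exp x + Real.exp (-x) ≤ 2 * Real.exp (x ^ 2 / 2) := by
    linarith [Real.cosh_eq x, Real.cosh_le_exp_half_sq x]
  have := Real.add_one_le_exp (-(x ^ 2 / 2))
  have hmul : Real.exp (-(x ^ 2 / 2)) * Real.exp (x ^ 2 / 2) = 1 := by
    rw [← Real.exp_add]; simp
  nlinarith [Real.exp_pos (x ^ 2 / 2)]

section

variable {d : ℕ}

local notation "Mat" => Matrix (Fin d) (Fin d) ℝ

lemma mexp_zero : mexp (0 : Mat) = 1 := NormedSpace.exp_zero

lemma mexp_neg (S : Mat) : mexp (-S) = (mexp S)⁻¹ := Matrix.exp_neg S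

lemma isUnit_mexp (S : Mat) : IsUnit (mexp S) := Matrix.isUnit_exp S

lemma mexp_smul_mul_mexp_smul (a b : ℝ) (S : Mat) :
    mexp (a • S) * mexp (b • S) = mexp ((a + b) • S) := by
  rw [add_smul, mexp, mexp, mexp,
    Matrix.exp_add_of_commute _ _ ((Commute.refl S).smul_left a |>.smul_right b)]

lemma transpose_mexp {S : Mat} (hS : S.IsSymm) : (mexp S)ᵀ = mexp S :=
  Matrix.IsSymm.exp hS

lemma isUnit_of_transpose_mul_self {U : Mat} (hU : Uᵀ * U = 1) : IsUnit U :=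
  (Matrix.isUnit_iff_isUnit_det U).mpr (Matrix.isUnit_det_of_left_inverse hU)

lemma mexp_conj_diagonal {U : Mat} (hU : Uᵀ * U = 1) (w : Fin d → ℝ) :
    mexp (U * diagonal w * Uᵀ) = U * diagonal (fun i => Real.exp (w i)) * Uᵀ := by
  have hinv : U⁻¹ = Uᵀ := Matrix.inv_eq_left_inv hU
  rw [mexp, ← hinv, Matrix.exp_conj _ _ (isUnit_of_transpose_mul_self hU), Matrix.exp_diagonal,
    Pi.exp_def]
  simp [Real.exp_eq_exp_ℝ]

lemma exists_orthogonal_diagonalization {S : Mat} (hS : S.IsSymm) :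
    ∃ (U : Mat) (w : Fin d → ℝ), Uᵀ * U = 1 ∧ U * Uᵀ = 1 ∧ S = U * diagonal w * Uᵀ := by
  have hH : S.IsHermitian := by simpa [Matrix.IsHermitian] using hS.eq
  have hU := hH.eigenvectorUnitary.2
  refine ⟨hH.eigenvectorUnitary, hH.eigenvalues, ?_, ?_, ?_⟩
  · simpa [Matrix.star_eq_conjTranspose] using (Matrix.mem_unitaryGroup_iff').mp hU
  · simpa [Matrix.star_eq_conjTranspose] using (Matrix.mem_unitaryGroup_iff).mp hU
  · simpa [Matrix.star_eq_conjTranspose] using hH.spectral_theorem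

lemma posDef_mexp {S : Mat} (hS : S.IsSymm) : (mexp S).PosDef := by
  have hhalf : ((1 / 2 : ℝ) • S).IsSymm := hS.smul _
  have := Matrix.PosDef.one.mul_mul_conjTranspose_same
    (Matrix.vecMul_injective_of_isUnit (isUnit_mexp ((1 / 2 : ℝ) • S)))
  rwa [mul_one, Matrix.conjTranspose_eq_transpose_of_trivial, transpose_mexp hhalf,
    mexp_smul_mul_mexp_smul, add_halves, one_smul] at this

lemma posDef_mul_mul_transpose {P C : Mat} (hP : P.PosDef) (hC : IsUnit C) :
    (C * P * Cᵀ).PosDef := by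
  simpa using hP.mul_mul_conjTranspose_same (Matrix.vecMul_injective_of_isUnit hC)

lemma exists_isSymm_mexp_eq {A : Mat} (hA : A.PosDef) : ∃ S : Mat, S.IsSymm ∧ mexp S = A := by
  obtain ⟨U, w, hU, hU', hAU⟩ := exists_orthogonal_diagonalization
    (show A.IsSymm by simpa [Matrix.IsSymm] using hA.isHermitian.eq)
  have hw : ∀ i, 0 < w i := by
    have hD : (diagonal w).PosDef := by
      have := posDef_mul_mul_transpose hA
        (isUnit_of_transpose_mul_self (U := Uᵀ) (by rwa [Matrix.transpose_transpose]))
      rwa [hAU, Matrix.transpose_transpose, show Uᵀ * (U * diagonal w * Uᵀ) * U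
        = (Uᵀ * U) * diagonal w * (Uᵀ * U) by noncomm_ring, hU, one_mul, mul_one] at this
    intro i
    simpa using hD.diag_pos (i := i)
  refine ⟨U * diagonal (fun i => Real.log (w i)) * Uᵀ, ?_, ?_⟩
  · simp [Matrix.IsSymm, Matrix.transpose_mul, Matrix.mul_assoc]
  · simp_rw [mexp_conj_diagonal hU, Real.exp_log (hw _), hAU]

lemma isSymm_mlog (A : Mat) : (mlog A).IsSymm := by
  unfold mlog
  split_ifs with h
  · exact h.choose_spec.1
  · exact Matrix.isSymm_zero

lemma mexp_mlog {A : Mat} (hA : A.PosDef) : mexp (mlog A) = A := by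
  rw [mlog, dif_pos (exists_isSymm_mexp_eq hA)]
  exact (exists_isSymm_mexp_eq hA).choose_spec.2

lemma mexp_neg_mlog {A : Mat} (hA : A.PosDef) : mexp (-mlog A) = A⁻¹ := by
  rw [mexp_neg, mexp_mlog hA]

lemma transpose_msqrt (A : Mat) : (msqrt A)ᵀ = msqrt A :=
  transpose_mexp ((isSymm_mlog A).smul _)

lemma transpose_minvsqrt (A : Mat) : (minvsqrt A)ᵀ = minvsqrt A :=
  transpose_mexp ((isSymm_mlog A).smul _)

lemma msqrt_mul_minvsqrt (A : Mat) : msqrt A * minvsqrt A = 1 := by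
  rw [msqrt, minvsqrt, mexp_smul_mul_mexp_smul, add_neg_cancel, zero_smul, mexp_zero]

lemma minvsqrt_mul_msqrt (A : Mat) : minvsqrt A * msqrt A = 1 := by
  rw [msqrt, minvsqrt, mexp_smul_mul_mexp_smul, neg_add_cancel, zero_smul, mexp_zero]

lemma msqrt_mul_msqrt {A : Mat} (hA : A.PosDef) : msqrt A * msqrt A = A := by
  rw [msqrt, mexp_smul_mul_mexp_smul, add_halves, one_smul, mexp_mlog hA]

lemma minvsqrt_mul_minvsqrt {A : Mat} (hA : A.PosDef) : minvsqrt A * minvsqrt A = A⁻¹ := by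
  rw [minvsqrt, mexp_smul_mul_mexp_smul, ← mexp_neg_mlog hA]
  norm_num

lemma frob_eq_sqrt_sum (A : Mat) : frob A = Real.sqrt (∑ i, ∑ j, A i j ^ 2) := by
  rw [frob, Matrix.trace, Finset.sum_comm]
  simp only [Matrix.diag_apply, Matrix.mul_apply, Matrix.transpose_apply, sq]

lemma frob_nonneg (A : Mat) : 0 ≤ frob A := Real.sqrt_nonneg _

lemma frob_sq (A : Mat) : frob A ^ 2 = ∑ i, ∑ j, A i j ^ 2 := by
  rw [frob_eq_sqrt_sum, Real.sq_sqrt (by positivity)]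

section Frobenius

attribute [local instance] Matrix.frobeniusNormedAddCommGroup Matrix.frobeniusNormedSpace

lemma frob_eq_norm (A : Mat) : frob A = ‖A‖ := by
  rw [frob_eq_sqrt_sum, Matrix.frobenius_norm_def, Real.sqrt_eq_rpow]
  norm_cast
  simp [sq_abs]

lemma frob_sum_le {ι : Type*} (s : Finset ι) (f : ι → Mat) :
    frob (∑ k ∈ s, f k) ≤ ∑ k ∈ s, frob (f k) := by
  simpa only [frob_eq_norm] using norm_sum_le s f

lemma frob_smul (c : ℝ) (A : Mat) : frob (c • A) = |c| * frob A := by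
  rw [frob_eq_norm, frob_eq_norm, norm_smul, Real.norm_eq_abs]

end Frobenius

lemma frob_orthogonal_conj {U V : Mat} (hU : U * Uᵀ = 1) (hV : V * Vᵀ = 1) (X : Mat) :
    frob (Uᵀ * X * V) = frob X := by
  rw [frob, frob, Matrix.transpose_mul, Matrix.transpose_mul, Matrix.transpose_transpose,
    show Vᵀ * (Xᵀ * U) * (Uᵀ * X * V) = Vᵀ * (Xᵀ * (U * Uᵀ) * X * V) by noncomm_ring, hU,
    mul_one, Matrix.trace_mul_comm, show Xᵀ * X * V * Vᵀ = Xᵀ * X * (V * Vᵀ) by noncomm_ring,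
    hV, mul_one]

lemma neg_conj_diagonal (U : Mat) (w : Fin d → ℝ) :
    -(U * diagonal w * Uᵀ) = U * diagonal (-w) * Uᵀ := by
  rw [show -w = fun i => -w i from rfl, ← Matrix.diagonal_neg, Matrix.mul_neg, Matrix.neg_mul]

lemma trace_conj_diagonal {U : Mat} (hU : Uᵀ * U = 1) (f : Fin d → ℝ) :
    (U * diagonal f * Uᵀ).trace = ∑ i, f i := by
  rw [Matrix.trace_mul_comm, ← mul_assoc, hU, one_mul, Matrix.trace_diagonal]

lemma frob_sq_conj_diagonal {U : Mat} (hU : Uᵀ * U = 1) (hU' : U * Uᵀ = 1) (w : Fin d → ℝ) :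
    frob (U * diagonal w * Uᵀ) ^ 2 = ∑ i, w i ^ 2 := by
  rw [← frob_orthogonal_conj hU' hU', show Uᵀ * (U * diagonal w * Uᵀ) * U
    = (Uᵀ * U) * diagonal w * (Uᵀ * U) by noncomm_ring, hU, one_mul, mul_one, frob_sq]
  simp [Matrix.diagonal_apply, ite_pow]

lemma trace_diagonal_mul_mul_diagonal_mul_transpose (f g : Fin d → ℝ) (W : Mat) :
    (diagonal f * W * diagonal g * Wᵀ).trace = ∑ i, ∑ j, f i * g j * W i j ^ 2 := by
  refine Finset.sum_congr rfl fun i _ => ?_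
  rw [Matrix.diag_apply, Matrix.mul_apply]
  refine Finset.sum_congr rfl fun j _ => ?_
  rw [Matrix.mul_diagonal, Matrix.diagonal_mul, Matrix.transpose_apply]
  ring

lemma trace_conj_diagonal_mul_conj_diagonal (U V : Mat) (f g : Fin d → ℝ) :
    (U * diagonal f * Uᵀ * (V * diagonal g * Vᵀ)).trace
      = ∑ i, ∑ j, f i * g j * (Uᵀ * V) i j ^ 2 := by
  rw [← trace_diagonal_mul_mul_diagonal_mul_transpose, Matrix.transpose_mul,
    Matrix.transpose_transpose,
    show U * diagonal f * Uᵀ * (V * diagonal g * Vᵀ) = U * (diagonal f * Uᵀ * V * diagonal g * Vᵀ)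
      by noncomm_ring, Matrix.trace_mul_comm]
  congr 1
  noncomm_ring

lemma frob_sub_sq_le_trace {S T : Mat} (hS : S.IsSymm) (hT : T.IsSymm) :
    frob (S - T) ^ 2 ≤ (mexp T * mexp (-S) + mexp S * mexp (-T) - 2).trace := by
  obtain ⟨U, a, hU, hU', rfl⟩ := exists_orthogonal_diagonalization hS
  obtain ⟨V, b, hV, hV', rfl⟩ := exists_orthogonal_diagonalization hT
  set W := Uᵀ * V
  have hone : (1 : Mat) = U * diagonal 1 * Uᵀ * (V * diagonal 1 * Vᵀ) := by
    rw [show diagonal (1 : Fin d → ℝ) = 1 from Matrix.diagonal_one, mul_one, mul_one, hU', hV',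
      mul_one]
  have hlhs : Uᵀ * (U * diagonal a * Uᵀ - V * diagonal b * Vᵀ) * V
      = diagonal a * W - W * diagonal b := by
    calc _ = (Uᵀ * U) * diagonal a * (Uᵀ * V) - (Uᵀ * V) * diagonal b * (Vᵀ * V) := by
          noncomm_ring
      _ = _ := by rw [hU, hV, one_mul, mul_one]
  have hrhs : (mexp (V * diagonal b * Vᵀ) * mexp (-(U * diagonal a * Uᵀ))
      + mexp (U * diagonal a * Uᵀ) * mexp (-(V * diagonal b * Vᵀ)) - 2).trace
      = ∑ i, ∑ j, (Real.exp (a i - b j) + Real.exp (-(a i - b j)) - 2) * W i j ^ 2 := by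
    rw [neg_conj_diagonal, neg_conj_diagonal, mexp_conj_diagonal hU, mexp_conj_diagonal hU,
      mexp_conj_diagonal hV, mexp_conj_diagonal hV, Matrix.trace_sub, Matrix.trace_add,
      Matrix.trace_mul_comm, show (2 : Mat) = 2 • 1 by norm_num, Matrix.trace_smul, hone]
    simp only [trace_conj_diagonal_mul_conj_diagonal, Finset.smul_sum,
      ← Finset.sum_add_distrib, ← Finset.sum_sub_distrib]
    refine Finset.sum_congr rfl fun i _ => Finset.sum_congr rfl fun j _ => ?_
    simp only [Pi.neg_apply, Pi.one_apply, Real.exp_sub, Real.exp_neg]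
    field_simp
    ring
  rw [← frob_orthogonal_conj hU' hV', hlhs, hrhs, frob_sq]
  refine Finset.sum_le_sum fun i _ => Finset.sum_le_sum fun j _ => ?_
  rw [Matrix.sub_apply, Matrix.diagonal_mul, Matrix.mul_diagonal,
    show (a i * W i j - W i j * b j) ^ 2 = (a i - b j) ^ 2 * W i j ^ 2 by ring]
  exact mul_le_mul_of_nonneg_right (sq_le_exp_add_exp_neg_sub_two _) (sq_nonneg _)

lemma trace_mexp_add_mexp_neg_sub_two_le {M : Mat} (hM : M.IsSymm) :
    (mexp M + mexp (-M) - 2).trace ≤ frob M ^ 2 * Real.exp (frob M ^ 2 / 2) := by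
  obtain ⟨U, w, hU, hU', rfl⟩ := exists_orthogonal_diagonalization hM
  have hexp : mexp (U * diagonal w * Uᵀ) + mexp (-(U * diagonal w * Uᵀ)) - 2
      = U * diagonal (fun i => Real.exp (w i) + Real.exp (-w i) - 2) * Uᵀ := by
    have htwo : (2 : Mat) = U * diagonal (fun _ => 2) * Uᵀ := by
      rw [Matrix.diagonal_ofNat, mul_two, add_mul, hU', one_add_one_eq_two]
    rw [neg_conj_diagonal, mexp_conj_diagonal hU, mexp_conj_diagonal hU, htwo,
      ← Matrix.add_mul, ← Matrix.sub_mul, ← Matrix.mul_add, ← Matrix.mul_sub,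
      Matrix.diagonal_add, Matrix.diagonal_sub]
    rfl
  have hw : ∀ i, w i ^ 2 ≤ ∑ j, w j ^ 2 := fun i =>
    Finset.single_le_sum (fun j _ => sq_nonneg (w j)) (Finset.mem_univ i)
  rw [hexp, trace_conj_diagonal hU, frob_sq_conj_diagonal hU hU', Finset.sum_mul]
  refine Finset.sum_le_sum fun i _ => (exp_add_exp_neg_sub_two_le (w i)).trans ?_
  gcongr
  exact hw i

lemma conj_mexp_mul_inv_add_mul_inv_sub_two {C : Mat} (hC : IsUnit C) (M : Mat) :
    C * mexp M * Cᵀ * (C * Cᵀ)⁻¹ + C * Cᵀ * (C * mexp M * Cᵀ)⁻¹ - 2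
      = C * (mexp M + mexp (-M) - 2) * C⁻¹ := by
  have hCT : Cᵀ * Cᵀ⁻¹ = 1 := Matrix.mul_nonsing_inv _
    (by rw [Matrix.det_transpose]; exact (Matrix.isUnit_iff_isUnit_det C).mp hC)
  have hCC : C * C⁻¹ = 1 := Matrix.mul_nonsing_inv _ ((Matrix.isUnit_iff_isUnit_det C).mp hC)
  have htwo : (2 : Mat) = C * 2 * C⁻¹ := by rw [mul_two, add_mul, hCC, one_add_one_eq_two]
  simp only [Matrix.mul_inv_rev, ← mexp_neg]
  calc _ = C * mexp M * (Cᵀ * Cᵀ⁻¹) * C⁻¹ + C * (Cᵀ * Cᵀ⁻¹) * mexp (-M) * C⁻¹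
        - C * 2 * C⁻¹ := by rw [← htwo]; noncomm_ring
    _ = _ := by rw [hCT]; noncomm_ring

lemma frob_mlog_sub_mlog_conj_mexp_le {C M : Mat} (hC : IsUnit C) (hM : M.IsSymm) :
    frob (mlog (C * Cᵀ) - mlog (C * mexp M * Cᵀ)) ≤ frob M * Real.exp (frob M ^ 2 / 4) := by
  have hP : (C * Cᵀ).PosDef := by
    simpa using posDef_mul_mul_transpose Matrix.PosDef.one hC
  have hQ : (C * mexp M * Cᵀ).PosDef := posDef_mul_mul_transpose (posDef_mexp hM) hC
  have hsq := frob_sub_sq_le_trace (isSymm_mlog (C * Cᵀ)) (isSymm_mlog (C * mexp M * Cᵀ))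
  rw [mexp_mlog hP, mexp_mlog hQ, mexp_neg_mlog hP, mexp_neg_mlog hQ,
    conj_mexp_mul_inv_add_mul_inv_sub_two hC, Matrix.trace_conj hC] at hsq
  have hexp : Real.exp (frob M ^ 2 / 2) = Real.exp (frob M ^ 2 / 4) ^ 2 := by
    rw [← Real.exp_nat_mul]; ring_nf
  rw [← pow_le_pow_iff_left₀ (frob_nonneg _)
    (mul_nonneg (frob_nonneg M) (Real.exp_pos _).le) two_ne_zero, mul_pow, ← hexp]
  exact hsq.trans (trace_mexp_add_mexp_neg_sub_two_le hM)

lemma conj_mexp_half_smul {C L : Mat} (hL : L.IsSymm) (r s : ℝ) :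
    C * mexp ((r / 2) • L) * mexp (s • L) * (C * mexp ((r / 2) • L))ᵀ
      = C * mexp ((r + s) • L) * Cᵀ := by
  rw [Matrix.transpose_mul, transpose_mexp (hL.smul _),
    show C * mexp ((r / 2) • L) * mexp (s • L) * (mexp ((r / 2) • L) * Cᵀ)
      = C * (mexp ((r / 2) • L) * mexp (s • L) * mexp ((r / 2) • L)) * Cᵀ by
      simp only [mul_assoc], mexp_smul_mul_mexp_smul, mexp_smul_mul_mexp_smul]
  congr 4
  ring

lemma frob_mlog_sub_le_of_subdivision {C L : Mat} (hC : IsUnit C) (hL : L.IsSymm) {n : ℕ}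
    (hn : 0 < n) :
    frob (mlog (C * Cᵀ) - mlog (C * mexp L * Cᵀ))
      ≤ frob L * Real.exp ((frob L / n) ^ 2 / 4) := by
  have hn' : (0 : ℝ) < n := Nat.cast_pos.mpr hn
  set g : ℕ → Mat := fun k => mlog (C * mexp (((k : ℝ) / n) • L) * Cᵀ) with hg
  have hg0 : g 0 = mlog (C * Cᵀ) := by simp [hg, mexp_zero]
  have hgn : g n = mlog (C * mexp L * Cᵀ) := by simp [hg, hn'.ne']
  have hstep : frob ((1 / n : ℝ) • L) = frob L / n := by
    rw [frob_smul, abs_of_pos (by positivity)]; ring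
  have hpiece : ∀ k, frob (g k - g (k + 1)) ≤ frob L / n * Real.exp ((frob L / n) ^ 2 / 4) := by
    intro k
    have h := frob_mlog_sub_mlog_conj_mexp_le
      (C := C * mexp ((((k : ℝ) / n) / 2) • L)) (hC.mul (isUnit_mexp _)) (hL.smul (1 / n : ℝ))
    have h0 := conj_mexp_half_smul (C := C) hL ((k : ℝ) / n) 0
    rw [zero_smul, mexp_zero, mul_one, add_zero] at h0
    rwa [h0, conj_mexp_half_smul hL, hstep, ← add_div, ← Nat.cast_succ] at h
  calc frob (mlog (C * Cᵀ) - mlog (C * mexp L * Cᵀ))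
      = frob (∑ k ∈ Finset.range n, (g k - g (k + 1))) := by
        rw [Finset.sum_range_sub', hg0, hgn]
    _ ≤ ∑ k ∈ Finset.range n, frob (g k - g (k + 1)) := frob_sum_le _ _
    _ ≤ ∑ _k ∈ Finset.range n, frob L / n * Real.exp ((frob L / n) ^ 2 / 4) :=
        Finset.sum_le_sum fun k _ => hpiece k
    _ = frob L * Real.exp ((frob L / n) ^ 2 / 4) := by
        rw [Finset.sum_const, Finset.card_range, nsmul_eq_mul]
        field_simp

theorem frob_mlog_sub_mlog_conj_mexp_le_frob {C L : Mat} (hC : IsUnit C) (hL : L.IsSymm) :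
    frob (mlog (C * Cᵀ) - mlog (C * mexp L * Cᵀ)) ≤ frob L := by
  have hlim : Filter.Tendsto (fun n : ℕ => frob L * Real.exp ((frob L / n) ^ 2 / 4))
      Filter.atTop (nhds (frob L)) := by
    have h := ((Real.continuous_exp.comp ((continuous_pow 2).div_const 4)).tendsto 0).comp
      (tendsto_const_div_atTop_nhds_zero_nat (frob L))
    simpa using h.const_mul (frob L)
  exact ge_of_tendsto hlim ((Filter.eventually_gt_atTop 0).mono
    fun n hn => frob_mlog_sub_le_of_subdivision hC hL hn)

lemma normG_msqrt_mul_mul_msqrt {G X : Mat} (hG : G.PosDef) (hX : X.IsSymm) :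
    normG G (msqrt G * X * msqrt G) = frob X := by
  rw [normG, innG, frob, ← minvsqrt_mul_minvsqrt hG, hX.eq,
    show minvsqrt G * minvsqrt G * (msqrt G * X * msqrt G) * (minvsqrt G * minvsqrt G)
        * (msqrt G * X * msqrt G)
      = minvsqrt G * ((minvsqrt G * msqrt G) * X * (msqrt G * minvsqrt G)
        * (minvsqrt G * msqrt G) * X) * msqrt G by noncomm_ring,
    minvsqrt_mul_msqrt, msqrt_mul_minvsqrt, one_mul, mul_one, mul_one, Matrix.trace_mul_cycle,
    msqrt_mul_minvsqrt, one_mul]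

end

/-- Generalized exponential metric increasing property:
`δ_r(A,B) ≥ ‖log_G(A) − log_G(B)‖_G`. -/
theorem stmt3 (d : ℕ) (A B G : Matrix (Fin d) (Fin d) ℝ)
    (hA : A.PosDef) (hB : B.PosDef) (hG : G.PosDef) :
    normG G (logMap G A - logMap G B) ≤ airm A B := by
  have hC : IsUnit (minvsqrt G * msqrt A) := (isUnit_mexp _).mul (isUnit_mexp _)
  have hX : (minvsqrt A * B * minvsqrt A).PosDef := by
    simpa [transpose_minvsqrt] using posDef_mul_mul_transpose hB (C := minvsqrt A) (isUnit_mexp _)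
  have hP : minvsqrt G * msqrt A * (minvsqrt G * msqrt A)ᵀ = minvsqrt G * A * minvsqrt G := by
    rw [Matrix.transpose_mul, transpose_msqrt, transpose_minvsqrt, ← mul_assoc,
      mul_assoc (minvsqrt G), msqrt_mul_msqrt hA]
  have hQ : minvsqrt G * msqrt A * mexp (mlog (minvsqrt A * B * minvsqrt A))
      * (minvsqrt G * msqrt A)ᵀ = minvsqrt G * B * minvsqrt G := by
    rw [mexp_mlog hX, Matrix.transpose_mul, transpose_msqrt, transpose_minvsqrt,
      show minvsqrt G * msqrt A * (minvsqrt A * B * minvsqrt A) * (msqrt A * minvsqrt G)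
        = minvsqrt G * (msqrt A * minvsqrt A) * B * (minvsqrt A * msqrt A) * minvsqrt G by
        noncomm_ring, msqrt_mul_minvsqrt, minvsqrt_mul_msqrt, mul_one, mul_one]
  rw [logMap, logMap, ← Matrix.sub_mul, ← Matrix.mul_sub,
    normG_msqrt_mul_mul_msqrt hG ((isSymm_mlog _).sub (isSymm_mlog _)), airm, ← hP, ← hQ]
  exact frob_mlog_sub_mlog_conj_mexp_le_frob hC (isSymm_mlog _)
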